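/- arXiv:2412.09235 — 2 statements merged into one kernel-verified Lean document; each statement's English description precedes it below -/
import Mathlib

section
/- Let X be a standard Borel space with a probability measure ρ, let ν be a probability measure on ℝ^d, let ε > 0, and let c : X × ℝ^d → ℝ be measurable with c(x,·) continuously differentiable for every x. Suppose there exist measurable functions φ : X → ℝ and ψ : ℝ^d → ℝ such that: (a) for every y ∈ ℝ^d the measure π(dx|y) := exp(−(c(x,y)+φ(x)+ψ(y))/ε) ρ(dx) is a probability measure on X; (b) ψ is differentiable and ∇ψ(y) = −∫_X ∇₂c(x,y) π(dx|y) for every y ∈ ℝ^d; (c) there exists Λ > 0 such that for every x in the support of ρ the map y ↦ c(x,y) + ψ(y) is Λ-semiconcave. Then for all y, z ∈ ℝ^d: KL(π(·|y) | π(·|z)) ≤ (Λ/(2ε))·|y−z|². -/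
open MeasureTheory Real ENNReal Filter
open scoped RealInnerProductSpace

noncomputable section

open Classical in
/-- The Kullback--Leibler divergence `KL(μ|ν)`: `∫ log (dμ/dν) dμ` if `μ ≪ ν`, `+∞` otherwise. -/
def KL {α : Type*} [MeasurableSpace α] (μ ν : Measure α) : ℝ≥0∞ :=
  if μ ≪ ν then ENNReal.ofReal (∫ x, Real.log (μ.rnDeriv ν x).toReal ∂μ) else ⊤

/-- The (topological) support of a measure. -/
def msupport {α : Type*} [TopologicalSpace α] [MeasurableSpace α] (μ : Measure α) : Set α :=
  {x | ∀ U : Set α, IsOpen U → x ∈ U → 0 < μ U}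

/-- The generalized transport cost `W_ω(μ, ν)`: the infimum of `∫ ω(z, y) dπ(z, y)` over
couplings `π` of `(μ, ν)`. -/
def Wcost {α : Type*} [MeasurableSpace α] (ω : α → α → ℝ) (μ ν : Measure α) : ℝ≥0∞ :=
  ⨅ (P : Measure (α × α)) (_ : P.map Prod.fst = μ ∧ P.map Prod.snd = ν),
    ∫⁻ p, ENNReal.ofReal (ω p.1 p.2) ∂P

/-- The squared Wasserstein distance of order two. -/
def W2sq {α : Type*} [MeasurableSpace α] [NormedAddCommGroup α] (μ ν : Measure α) : ℝ≥0∞ :=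
  Wcost (fun y z => ‖y - z‖ ^ 2) μ ν

/-- Talagrand's transport inequality `TI(τ)` for `ν`. -/
def TI {α : Type*} [MeasurableSpace α] [NormedAddCommGroup α] (τ : ℝ) (ν : Measure α) : Prop :=
  ∀ μ : Measure α, IsProbabilityMeasure μ → W2sq μ ν ≤ ENNReal.ofReal (2 * τ) * KL μ ν

/-- The generalized transport inequality `TI_ω(τ)` for `ν`. -/
def TIcost {α : Type*} [MeasurableSpace α] (ω : α → α → ℝ) (τ : ℝ) (ν : Measure α) : Prop :=
  ∀ μ : Measure α, IsProbabilityMeasure μ → Wcost ω μ ν ≤ ENNReal.ofReal (2 * τ) * KL μ ν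

/-- `Λ`-semiconcavity of a (differentiable) function on an inner product space. -/
def Semiconcave {E : Type*} [NormedAddCommGroup E] [InnerProductSpace ℝ E] [CompleteSpace E]
    (Λ : ℝ) (f : E → ℝ) : Prop :=
  ∀ y z : E, f z - f y ≤ ⟪gradient f y, z - y⟫ + Λ / 2 * ‖z - y‖ ^ 2

/-- `(Λ, ω)`-semiconcavity of a (differentiable) function on an inner product space. -/
def SemiconcaveW {E : Type*} [NormedAddCommGroup E] [InnerProductSpace ℝ E] [CompleteSpace E]
    (Λ : ℝ) (ω : E → E → ℝ) (f : E → ℝ) : Prop :=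
  ∀ y z : E, f z - f y ≤ ⟪gradient f y, z - y⟫ + Λ / 2 * ω z y

/-- The plan with density `exp(-(c(x,y) + f(x) + g(y))/ε)` with respect to `ρ ⊗ ν`. -/
def plan {X Y : Type*} [MeasurableSpace X] [MeasurableSpace Y]
    (ρ : Measure X) (ν : Measure Y) [SFinite ν] (ε : ℝ) (c : X → Y → ℝ)
    (f : X → ℝ) (g : Y → ℝ) : Measure (X × Y) :=
  (ρ.prod ν).withDensity fun p => ENNReal.ofReal (Real.exp (-(c p.1 p.2 + f p.1 + g p.2) / ε))

/-- The conditional plan given the second coordinate `y`: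
`π(dx|y) = exp(-(c(x,y) + f(x) + g(y))/ε) ρ(dx)`. -/
def condSnd {X Y : Type*} [MeasurableSpace X]
    (ρ : Measure X) (ε : ℝ) (c : X → Y → ℝ) (f : X → ℝ) (g : Y → ℝ) (y : Y) : Measure X :=
  ρ.withDensity fun x => ENNReal.ofReal (Real.exp (-(c x y + f x + g y) / ε))

/-- The conditional plan given the first coordinate `x`:
`π(dy|x) = exp(-(c(x,y) + f(x) + g(y))/ε) ν(dy)`. -/
def condFst {X Y : Type*} [MeasurableSpace Y]
    (ν : Measure Y) (ε : ℝ) (c : X → Y → ℝ) (f : X → ℝ) (g : Y → ℝ) (x : X) : Measure Y :=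
  ν.withDensity fun y => ENNReal.ofReal (Real.exp (-(c x y + f x + g y) / ε))

/-- The logarithmic Sobolev inequality `LSI(C)` for `ρ`. -/
def LSI {F : Type*} [NormedAddCommGroup F] [InnerProductSpace ℝ F] [CompleteSpace F]
    [MeasurableSpace F] (C : ℝ) (ρ : Measure F) : Prop :=
  ∀ g : F → ℝ, Differentiable ℝ g → (∀ x, 0 < g x) →
    IsProbabilityMeasure (ρ.withDensity fun x => ENNReal.ofReal (g x)) →
    KL (ρ.withDensity fun x => ENNReal.ofReal (g x)) ρ ≤
      ENNReal.ofReal (C / 2 * ∫ x, ‖gradient (fun x' => Real.log (g x')) x‖ ^ 2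
        ∂(ρ.withDensity fun x => ENNReal.ofReal (g x)))

/-! Writing `f_x = c(x, ·) + ψ`, the conditional `π(·|y)` has density `exp((f_x(z) - f_x(y))/ε)`
with respect to `π(·|z)`, so `KL(π(·|y) | π(·|z)) = ε⁻¹ ∫ (f_x(z) - f_x(y)) π(dx|y)`.
Semiconcavity bounds the integrand by `⟨∇₂c(x,y) + ∇ψ(y), z - y⟩ + Λ/2 |z - y|²`, and the
first-order condition `∫ ∇₂c(x,y) π(dx|y) = -∇ψ(y)` cancels the linear term. That condition is
only meaningful once `∇₂c(·,y)` is `π(·|y)`-integrable: semiconcavity at `y - εw` bounds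
`exp ⟨∇₂c(x,y), w⟩` by a constant times the density of `π(·|y - εw)` with respect to `π(·|y)`,
which has total mass one. -/

theorem msupport_eq_support {α : Type*} [TopologicalSpace α] [MeasurableSpace α]
    (μ : Measure α) : msupport μ = μ.support := by
  ext x
  rw [(nhds_basis_opens x).mem_measureSupport]
  exact forall_congr' fun U => by rw [and_imp, imp.swap]

theorem ae_mem_msupport {α : Type*} [TopologicalSpace α] [HereditarilyLindelofSpace α]
    [MeasurableSpace α] (μ : Measure α) : ∀ᵐ x ∂μ, x ∈ msupport μ := by
  rw [msupport_eq_support]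
  exact Measure.support_mem_ae

theorem ofReal_integral_le_of_ae_le {α : Type*} [MeasurableSpace α] {μ : Measure α}
    {f g : α → ℝ} (hg : Integrable g μ) (hfg : f ≤ᵐ[μ] g) :
    ENNReal.ofReal (∫ x, f x ∂μ) ≤ ENNReal.ofReal (∫ x, g x ∂μ) := by
  by_cases hf : Integrable f μ
  · exact ENNReal.ofReal_le_ofReal (integral_mono_ae hf hg hfg)
  · simp [integral_undef hf]

theorem integrable_of_isFiniteMeasure_withDensity_ofReal {α : Type*} [MeasurableSpace α]
    {μ : Measure α} {f : α → ℝ} (hf : AEStronglyMeasurable f μ) (hf0 : 0 ≤ᵐ[μ] f)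
    [IsFiniteMeasure (μ.withDensity fun x => ENNReal.ofReal (f x))] : Integrable f μ := by
  refine ⟨hf, (hasFiniteIntegral_iff_ofReal hf0).2 ?_⟩
  rw [← setLIntegral_univ, ← withDensity_apply _ MeasurableSet.univ]
  exact measure_lt_top _ _

theorem KL_withDensity_exp {α : Type*} [MeasurableSpace α] (ν : Measure α) [SigmaFinite ν]
    {g : α → ℝ} (hg : Measurable g) :
    KL (ν.withDensity fun x => ENNReal.ofReal (exp (g x))) ν
      = ENNReal.ofReal (∫ x, g x ∂ν.withDensity fun x => ENNReal.ofReal (exp (g x))) := by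
  have hac := withDensity_absolutelyContinuous ν fun x => ENNReal.ofReal (exp (g x))
  rw [KL, if_pos hac]
  congr 1
  refine integral_congr_ae ?_
  filter_upwards [hac.ae_le (Measure.rnDeriv_withDensity ν (hg.exp.ennreal_ofReal))] with x hx
  rw [hx, ENNReal.toReal_ofReal (exp_nonneg _), log_exp]

theorem integrable_of_integrable_exp_of_integrable_exp_neg {α : Type*} [MeasurableSpace α]
    {μ : Measure α} {f : α → ℝ} (hpos : Integrable (fun x => exp (f x)) μ)
    (hneg : Integrable (fun x => exp (-f x)) μ) : Integrable f μ := by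
  simpa using ProbabilityTheory.integrable_pow_of_integrable_exp_mul (t := 1) one_ne_zero
    (by simpa using hpos) (by simpa using hneg) 1

section Gradient

variable {E : Type*} [NormedAddCommGroup E] [InnerProductSpace ℝ E]

theorem integrable_of_forall_integrable_inner [FiniteDimensional ℝ E] {α : Type*}
    [MeasurableSpace α] {μ : Measure α} {g : α → E}
    (hg : ∀ v, Integrable (fun x => ⟪g x, v⟫) μ) : Integrable g μ := by
  let b := stdOrthonormalBasis ℝ E
  have hsum : g = fun x => ∑ i, ⟪b i, g x⟫ • b i := funext fun x => (b.sum_repr' (g x)).symm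
  rw [hsum]
  refine integrable_finsetSum _ fun i _ => Integrable.smul_const ?_ _
  simpa only [real_inner_comm] using hg (b i)

variable [CompleteSpace E]

theorem inner_gradient_eq_fderiv (f : E → ℝ) (x v : E) :
    ⟪gradient f x, v⟫ = fderiv ℝ f x v := by
  rw [← toDual_gradient, InnerProductSpace.toDual_apply_apply]

theorem Semiconcave.sub_le_fderiv {Λ : ℝ} {f : E → ℝ} (hf : Semiconcave Λ f) (y z : E) :
    f z - f y ≤ fderiv ℝ f y (z - y) + Λ / 2 * ‖z - y‖ ^ 2 := by
  simpa only [inner_gradient_eq_fderiv] using hf y z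

theorem Semiconcave.add_sub_le_fderiv {Λ : ℝ} {f g : E → ℝ}
    (hfg : Semiconcave Λ (fun y => f y + g y)) {y : E} (hf : DifferentiableAt ℝ f y)
    (hg : DifferentiableAt ℝ g y) (z : E) :
    f z + g z - (f y + g y) ≤
      fderiv ℝ f y (z - y) + fderiv ℝ g y (z - y) + Λ / 2 * ‖z - y‖ ^ 2 := by
  have h := hfg.sub_le_fderiv y z
  rwa [fderiv_fun_add hf hg] at h

end Gradient

theorem measurable_fderiv_apply_of_differentiableAt {α E : Type*} [MeasurableSpace α]
    [NormedAddCommGroup E] [NormedSpace ℝ E] {f : α → E → ℝ}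
    (hf : ∀ w, Measurable fun x => f x w) {y : E} (hd : ∀ x, DifferentiableAt ℝ (f x) y)
    (v : E) : Measurable fun x => fderiv ℝ (f x) y v := by
  refine measurable_of_tendsto_metrizable
    (f := fun (n : ℕ) x => (n : ℝ) • (f x (y + (n : ℝ)⁻¹ • v) - f x y))
    (fun n => ((hf _).sub (hf _)).const_smul (n : ℝ)) (tendsto_pi_nhds.2 fun x => ?_)
  exact (hd x).hasFDerivAt.lim v (tendsto_norm_atTop_atTop.comp tendsto_natCast_atTop_atTop)

section ConditionalPlan

variable {X Y : Type*} [MeasurableSpace X] {ρ : Measure X} {ε : ℝ} {c : X → Y → ℝ} {φ : X → ℝ}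
  {ψ : Y → ℝ}

theorem condSnd_absolutelyContinuous (y : Y) : condSnd ρ ε c φ ψ y ≪ ρ :=
  withDensity_absolutelyContinuous _ _

theorem condSnd_eq_withDensity_condSnd (hc : ∀ y, Measurable fun x => c x y)
    (hφ : Measurable φ) (y z : Y) :
    condSnd ρ ε c φ ψ y = (condSnd ρ ε c φ ψ z).withDensity
      fun x => ENNReal.ofReal (exp ((c x z + ψ z - (c x y + ψ y)) / ε)) := by
  rw [condSnd, condSnd, ← withDensity_mul ρ (by fun_prop) (by fun_prop)]
  congr 1 with x
  rw [Pi.mul_apply, ← ENNReal.ofReal_mul (exp_nonneg _), ← exp_add]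
  ring_nf

end ConditionalPlan

section ConditionalPlanGradient

variable {X E : Type*} [MeasurableSpace X] [NormedAddCommGroup E] [InnerProductSpace ℝ E]
  [CompleteSpace E] {ρ : Measure X} {ε Λ : ℝ} {c : X → E → ℝ} {φ : X → ℝ} {ψ : E → ℝ}

theorem integrable_exp_fderiv_condSnd (hε : 0 < ε) (hc : ∀ y, Measurable fun x => c x y)
    (hφ : Measurable φ) (hfin : ∀ y, IsFiniteMeasure (condSnd ρ ε c φ ψ y))
    (hsc : ∀ᵐ x ∂ρ, Semiconcave Λ fun y => c x y + ψ y) {y : E}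
    (hcd : ∀ x, DifferentiableAt ℝ (c x) y) (hψ : DifferentiableAt ℝ ψ y) (w : E) :
    Integrable (fun x => exp (fderiv ℝ (c x) y w)) (condSnd ρ ε c φ ψ y) := by
  set z := y - ε • w
  have hdens : Integrable (fun x => exp ((c x y + ψ y - (c x z + ψ z)) / ε))
      (condSnd ρ ε c φ ψ y) := by
    have := hfin z
    rw [condSnd_eq_withDensity_condSnd hc hφ z y] at this
    exact integrable_of_isFiniteMeasure_withDensity_ofReal
      (by fun_prop : Measurable _).aestronglyMeasurable (ae_of_all _ fun _ => exp_nonneg _)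
  refine (hdens.const_mul (exp ((fderiv ℝ ψ y (z - y) + Λ / 2 * ‖z - y‖ ^ 2) / ε))).mono'
    (measurable_fderiv_apply_of_differentiableAt hc hcd w).exp.aestronglyMeasurable ?_
  filter_upwards [(condSnd_absolutelyContinuous y).ae_le hsc] with x hx
  have hzy : z - y = -(ε • w) := by simp [z]
  have hle := hx.add_sub_le_fderiv (hcd x) hψ z
  rw [hzy, map_neg, map_smul, smul_eq_mul] at hle
  rw [norm_of_nonneg (exp_nonneg _), ← exp_add, exp_le_exp, hzy, ← add_div, le_div_iff₀ hε]
  linarith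

theorem integrable_fderiv_apply_condSnd (hε : 0 < ε) (hc : ∀ y, Measurable fun x => c x y)
    (hφ : Measurable φ) (hfin : ∀ y, IsFiniteMeasure (condSnd ρ ε c φ ψ y))
    (hsc : ∀ᵐ x ∂ρ, Semiconcave Λ fun y => c x y + ψ y) {y : E}
    (hcd : ∀ x, DifferentiableAt ℝ (c x) y) (hψ : DifferentiableAt ℝ ψ y) (v : E) :
    Integrable (fun x => fderiv ℝ (c x) y v) (condSnd ρ ε c φ ψ y) :=
  integrable_of_integrable_exp_of_integrable_exp_neg
    (integrable_exp_fderiv_condSnd hε hc hφ hfin hsc hcd hψ v)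
    (by simpa using integrable_exp_fderiv_condSnd hε hc hφ hfin hsc hcd hψ (-v))

theorem integrable_gradient_condSnd [FiniteDimensional ℝ E] (hε : 0 < ε)
    (hc : ∀ y, Measurable fun x => c x y) (hφ : Measurable φ)
    (hfin : ∀ y, IsFiniteMeasure (condSnd ρ ε c φ ψ y))
    (hsc : ∀ᵐ x ∂ρ, Semiconcave Λ fun y => c x y + ψ y) {y : E}
    (hcd : ∀ x, DifferentiableAt ℝ (c x) y) (hψ : DifferentiableAt ℝ ψ y) :
    Integrable (fun x => gradient (c x) y) (condSnd ρ ε c φ ψ y) :=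
  integrable_of_forall_integrable_inner fun v => by
    simpa only [inner_gradient_eq_fderiv] using
      integrable_fderiv_apply_condSnd hε hc hφ hfin hsc hcd hψ v

end ConditionalPlanGradient

theorem kl_between_conditionals_general
    {X : Type*} [MeasurableSpace X] [TopologicalSpace X] [PolishSpace X]
    {d : ℕ} (ρ : Measure X)
    (ε : ℝ) (hε : 0 < ε)
    (c : X → EuclideanSpace ℝ (Fin d) → ℝ)
    (hc_meas : Measurable (Function.uncurry c))
    (hc_smooth : ∀ x, ContDiff ℝ 1 (c x))
    (φ : X → ℝ) (ψ : EuclideanSpace ℝ (Fin d) → ℝ)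
    (hφ_meas : Measurable φ)
    (hcond : ∀ y, IsProbabilityMeasure (condSnd ρ ε c φ ψ y))
    (hψ_diff : Differentiable ℝ ψ)
    (hψ_grad : ∀ y, gradient ψ y = -∫ x, gradient (c x) y ∂(condSnd ρ ε c φ ψ y))
    (Λ : ℝ)
    (hsc : ∀ x ∈ msupport ρ, Semiconcave Λ (fun y => c x y + ψ y)) :
    ∀ y z : EuclideanSpace ℝ (Fin d),
      KL (condSnd ρ ε c φ ψ y) (condSnd ρ ε c φ ψ z)
        ≤ ENNReal.ofReal (Λ / (2 * ε) * ‖y - z‖ ^ 2) := by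
  intro y z
  have hc : ∀ w, Measurable fun x => c x w := fun w => hc_meas.comp measurable_prodMk_right
  have hcd : ∀ x, DifferentiableAt ℝ (c x) y := fun x =>
    (hc_smooth x).differentiable one_ne_zero y
  have hfin : ∀ w, IsFiniteMeasure (condSnd ρ ε c φ ψ w) := fun w => by
    have := hcond w; infer_instance
  have hsc' : ∀ᵐ x ∂ρ, Semiconcave Λ fun y => c x y + ψ y := (ae_mem_msupport ρ).mono hsc
  have hint := integrable_fderiv_apply_condSnd hε hc hφ_meas hfin hsc' hcd (hψ_diff y) (z - y)
  have hmean :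
      ∫ x, fderiv ℝ (c x) y (z - y) ∂(condSnd ρ ε c φ ψ y) = -fderiv ℝ ψ y (z - y) := by
    simp_rw [← inner_gradient_eq_fderiv, real_inner_comm (z - y)]
    rw [integral_inner (integrable_gradient_condSnd hε hc hφ_meas hfin hsc' hcd (hψ_diff y)),
      ← neg_neg (∫ x, _ ∂_), ← hψ_grad y, inner_neg_right, real_inner_comm]
  have hdens : condSnd ρ ε c φ ψ y = _ := condSnd_eq_withDensity_condSnd hc hφ_meas y z
  have := hcond z
  rw [hdens, KL_withDensity_exp _ (by fun_prop), ← hdens]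
  set K := fderiv ℝ ψ y (z - y) + Λ / 2 * ‖z - y‖ ^ 2 with hK
  calc ENNReal.ofReal (∫ x, (c x z + ψ z - (c x y + ψ y)) / ε ∂condSnd ρ ε c φ ψ y)
      ≤ ENNReal.ofReal (∫ x, (fderiv ℝ (c x) y (z - y) + K) / ε ∂condSnd ρ ε c φ ψ y) := by
        refine ofReal_integral_le_of_ae_le ((hint.add (integrable_const K)).div_const ε) ?_
        filter_upwards [(condSnd_absolutelyContinuous y).ae_le hsc'] with x hx
        gcongr
        linarith [hx.add_sub_le_fderiv (hcd x) (hψ_diff y) z]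
    _ = ENNReal.ofReal (Λ / (2 * ε) * ‖y - z‖ ^ 2) := by
        rw [integral_div, integral_add hint (integrable_const K), hmean, integral_const,
          probReal_univ, one_smul, norm_sub_rev, hK]
        ring_nf

/-- **KL bound between conditional plans** (Lemma 2.1). -/
theorem kl_between_conditionals
    {X : Type*} [MeasurableSpace X] [TopologicalSpace X] [PolishSpace X] [BorelSpace X]
    {d : ℕ} (ρ : Measure X) [IsProbabilityMeasure ρ]
    (ε : ℝ) (hε : 0 < ε)
    (c : X → EuclideanSpace ℝ (Fin d) → ℝ)
    (hc_meas : Measurable (Function.uncurry c))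
    (hc_smooth : ∀ x, ContDiff ℝ 1 (c x))
    (φ : X → ℝ) (ψ : EuclideanSpace ℝ (Fin d) → ℝ)
    (hφ_meas : Measurable φ) (hψ_meas : Measurable ψ)
    (hcond : ∀ y, IsProbabilityMeasure (condSnd ρ ε c φ ψ y))
    (hψ_diff : Differentiable ℝ ψ)
    (hψ_grad : ∀ y, gradient ψ y = -∫ x, gradient (c x) y ∂(condSnd ρ ε c φ ψ y))
    (Λ : ℝ) (hΛ : 0 < Λ)
    (hsc : ∀ x ∈ msupport ρ, Semiconcave Λ (fun y => c x y + ψ y)) :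
    ∀ y z : EuclideanSpace ℝ (Fin d),
      KL (condSnd ρ ε c φ ψ y) (condSnd ρ ε c φ ψ z)
        ≤ ENNReal.ofReal (Λ / (2 * ε) * ‖y - z‖ ^ 2) :=
  kl_between_conditionals_general ρ ε hε c hc_meas hc_smooth φ ψ hφ_meas hcond hψ_diff hψ_grad Λ hsc
end
end

section
/- Let Σ be a symmetric positive definite real d×d matrix, let α, β, ε > 0, and let A₀ be a symmetric positive semidefinite d×d matrix commuting with Σ. Define recursively Bₙ := Σ·(AₙΣ + εα·Id)^{−1} and Aₙ₊₁ := Σ·(BₙΣ + εβ·Id)^{−1}. Then all Aₙ and Bₙ are well-defined symmetric positive semidefinite matrices commuting with Σ (and Bₙ, Aₙ₊₁ are positive definite for all n ≥ 0), and the sequences converge: Aₙ → A_∞ := −(εα/2)·Σ^{−1} + ((ε²α²/4)·Σ^{−2} + (α/β)·Id)^{1/2} and Bₙ → B_∞ := −(εβ/2)·Σ^{−1} + ((ε²β²/4)·Σ^{−2} + (β/α)·Id)^{1/2}, where M^{1/2} denotes the positive semidefinite square root of a positive semidefinite matrix M. -/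
/-!
Σ and A₀ are commuting symmetric matrices, so they are diagonal in a common orthonormal basis.
Conjugation by the corresponding orthogonal matrix is an algebra map from vectors to matrices,
so the recursion stays diagonal in that basis and decouples into scalar recursions: on a joint
eigenvector with Σ-eigenvalue s, one round is a ↦ b = s / (a s + εα) ↦ s / (b s + εβ). This
composite is a Möbius map contracting [0, ∞) with ratio (s² / (s² + ε²αβ))², and its fixed point
is the positive root of a (a s + εα) = (α/β) s, which is the corresponding eigenvalue of A_∞.
-/

noncomputable section

open Filter Matrix Module.End Topology Unitary
open scoped ComplexOrder

section JointEigenbasis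

variable {𝕜 E : Type*} [RCLike 𝕜] [NormedAddCommGroup E] [InnerProductSpace 𝕜 E]
  [FiniteDimensional 𝕜 E]

theorem LinearMap.IsSymmetric.exists_orthonormalBasis_eigenvectors_of_commute
    {T S : E →ₗ[𝕜] E} (hT : T.IsSymmetric) (hS : S.IsSymmetric) (hTS : Commute T S)
    {m : ℕ} (hm : Module.finrank 𝕜 E = m) :
    ∃ (b : OrthonormalBasis (Fin m) 𝕜 E) (μ ν : Fin m → 𝕜),
      ∀ i, T (b i) = μ i • b i ∧ S (b i) = ν i • b i := by
  let V : 𝕜 × 𝕜 → Submodule 𝕜 E := fun μ => eigenspace T μ.2 ⊓ eigenspace S μ.1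
  have hV_all : DirectSum.IsInternal V := hT.directSum_isInternal_of_commute hS hTS
  have hV : DirectSum.IsInternal fun μ : {μ // V μ ≠ ⊥} => V μ :=
    DirectSum.isInternal_ne_bot_iff.mpr hV_all
  have hV_orth :
      OrthogonalFamily 𝕜 (fun μ : {μ // V μ ≠ ⊥} => V μ) fun μ => (V μ).subtypeₗᵢ :=
    fun μ ν hμν => hT.orthogonalFamily_eigenspace_inf_eigenspace hS (Subtype.coe_ne_coe.mpr hμν)
  have : Fintype {μ // V μ ≠ ⊥} := hV_all.submodule_iSupIndep.fintypeNeBotOfFiniteDimensional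
  refine ⟨hV.subordinateOrthonormalBasis hm hV_orth,
    fun i => (hV.subordinateOrthonormalBasisIndex hm i hV_orth).1.2,
    fun i => (hV.subordinateOrthonormalBasisIndex hm i hV_orth).1.1, fun i => ?_⟩
  have hi := hV.subordinateOrthonormalBasis_subordinate hm i hV_orth
  exact ⟨mem_eigenspace_iff.mp hi.1, mem_eigenspace_iff.mp hi.2⟩

end JointEigenbasis

namespace Matrix

variable {𝕜 n : Type*} [RCLike 𝕜] [Fintype n] [DecidableEq n]

def conjDiagonal (U : unitaryGroup n 𝕜) : (n → 𝕜) →ₐ[𝕜] Matrix n n 𝕜 :=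
  (conjStarAlgAut 𝕜 _ U).toAlgEquiv.toAlgHom.comp (diagonalAlgHom 𝕜)

theorem conjDiagonal_apply (U : unitaryGroup n 𝕜) (x : n → 𝕜) :
    conjDiagonal U x = U * diagonal x * star (U : Matrix n n 𝕜) := rfl

variable {U : unitaryGroup n 𝕜}

theorem mul_eq_mul_diagonal_of_mulVec_col {A V : Matrix n n 𝕜} {a : n → 𝕜}
    (h : ∀ j, A *ᵥ col V j = a j • col V j) : A * V = V * diagonal a := by
  ext i j
  rw [mul_diagonal]
  simpa [mul_apply, mulVec, dotProduct, mul_comm] using congrFun (h j) i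

theorem eq_conjDiagonal_of_mul_eq {A : Matrix n n 𝕜} {a : n → 𝕜} (h : A * U = U * diagonal a) :
    A = conjDiagonal U a := by
  rw [conjDiagonal_apply, ← h, mul_assoc, Unitary.mul_star_self_of_mem U.2, mul_one]

theorem IsHermitian.exists_conjDiagonal_of_commute {A B : Matrix n n 𝕜} (hA : A.IsHermitian)
    (hB : B.IsHermitian) (hAB : Commute A B) :
    ∃ (U : unitaryGroup n 𝕜) (a b : n → 𝕜), A = conjDiagonal U a ∧ B = conjDiagonal U b := by
  have hAB' : Commute (toEuclideanLin A) (toEuclideanLin B) := by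
    simp only [Commute, SemiconjBy, Module.End.mul_eq_comp, ← toLpLin_mul_same, hAB.eq]
  obtain ⟨b₀, μ, ν, hb₀⟩ :=
    (isSymmetric_toEuclideanLin_iff.mpr hA).exists_orthonormalBasis_eigenvectors_of_commute
      (isSymmetric_toEuclideanLin_iff.mpr hB) hAB' finrank_euclideanSpace
  let e := Fintype.equivFin n
  let b := b₀.reindex e.symm
  let U : unitaryGroup n 𝕜 :=
    ⟨_, (EuclideanSpace.basisFun n 𝕜).toMatrix_orthonormalBasis_mem_unitary b⟩
  have hcol : ∀ j, col (U : Matrix n n 𝕜) j = b₀ (e j) := fun j => by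
    ext i; simp [U, b, Module.Basis.toMatrix_apply]
  refine ⟨U, μ ∘ e, ν ∘ e,
    eq_conjDiagonal_of_mul_eq (mul_eq_mul_diagonal_of_mulVec_col fun j => ?_),
    eq_conjDiagonal_of_mul_eq (mul_eq_mul_diagonal_of_mulVec_col fun j => ?_)⟩
  · rw [hcol]; simpa using congrArg WithLp.ofLp (hb₀ (e j)).1
  · rw [hcol]; simpa using congrArg WithLp.ofLp (hb₀ (e j)).2

theorem commute_conjDiagonal (x y : n → 𝕜) : Commute (conjDiagonal U x) (conjDiagonal U y) :=
  (Commute.all x y).map _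

theorem conjDiagonal_inv {x : n → 𝕜} (hx : ∀ i, x i ≠ 0) :
    (conjDiagonal U x)⁻¹ = conjDiagonal U x⁻¹ := by
  refine inv_eq_right_inv ?_
  rw [← map_mul, ← map_one (conjDiagonal U)]
  congr 1
  ext i
  exact mul_inv_cancel₀ (hx i)

theorem isUnit_conjDiagonal {x : n → 𝕜} (hx : ∀ i, x i ≠ 0) : IsUnit (conjDiagonal U x) :=
  (Pi.isUnit_iff.mpr fun i => (hx i).isUnit).map _

theorem posSemidef_conjDiagonal_iff {x : n → 𝕜} :
    (conjDiagonal U x).PosSemidef ↔ ∀ i, 0 ≤ x i := by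
  rw [conjDiagonal_apply, IsUnit.posSemidef_star_right_conjugate_iff Unitary.isUnit_coe]
  exact posSemidef_diagonal_iff

theorem posDef_conjDiagonal_iff {x : n → 𝕜} :
    (conjDiagonal U x).PosDef ↔ ∀ i, 0 < x i := by
  rw [conjDiagonal_apply, IsUnit.posDef_star_right_conjugate_iff Unitary.isUnit_coe]
  exact posDef_diagonal_iff

theorem continuous_conjDiagonal : Continuous (conjDiagonal U) :=
  (conjDiagonal U).toLinearMap.continuous_of_finiteDimensional

theorem conjDiagonal_mul_add_smul_one (x y : n → 𝕜) (c : 𝕜) :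
    conjDiagonal U x * conjDiagonal U y + c • 1 = conjDiagonal U fun i => x i * y i + c := by
  rw [← map_mul, ← map_one (conjDiagonal U), ← map_smul, ← map_add]
  congr 1
  ext i
  simp

theorem conjDiagonal_mul_inv_mul_add_smul_one {s x : n → 𝕜} {c : 𝕜}
    (hx : ∀ i, x i * s i + c ≠ 0) :
    conjDiagonal U s * (conjDiagonal U x * conjDiagonal U s + c • 1)⁻¹ =
      conjDiagonal U fun i => s i / (x i * s i + c) := by
  rw [conjDiagonal_mul_add_smul_one, conjDiagonal_inv hx, ← map_mul]
  congr 1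
  ext i
  simp [div_eq_mul_inv]

end Matrix

theorem tendsto_iterate_of_dist_le_mul {X : Type*} [PseudoMetricSpace X] {f : X → X}
    {S : Set X} {p x : X} {k : ℝ} (hk₀ : 0 ≤ k) (hk₁ : k < 1) (hS : Set.MapsTo f S S)
    (hf : ∀ y ∈ S, dist (f y) p ≤ k * dist y p) (hx : x ∈ S) :
    Tendsto (fun n => f^[n] x) atTop (𝓝 p) := by
  have hbound : ∀ n, dist (f^[n] x) p ≤ k ^ n * dist x p := by
    intro n
    induction n with
    | zero => simp
    | succ n ih =>
      rw [Function.iterate_succ_apply', pow_succ', mul_assoc]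
      exact (hf _ (hS.iterate n hx)).trans (mul_le_mul_of_nonneg_left ih hk₀)
  refine tendsto_iff_dist_tendsto_zero.mpr (squeeze_zero (fun n => dist_nonneg) hbound ?_)
  simpa using (tendsto_pow_atTop_nhds_zero_of_lt_one hk₀ hk₁).mul_const (dist x p)

section SinkhornScalar

def sinkhornStep (s α ε x : ℝ) : ℝ := s / (x * s + ε * α)

def sinkhornRound (s α β ε x : ℝ) : ℝ := sinkhornStep s β ε (sinkhornStep s α ε x)

def sinkhornLimit (s α β ε : ℝ) : ℝ :=
  -(ε * α / 2) * s⁻¹ + √(ε ^ 2 * α ^ 2 / 4 * (s⁻¹ * s⁻¹) + α / β)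

variable {s α β ε x y : ℝ}

theorem sinkhornStep_pos (hs : 0 < s) (hα : 0 < α) (hε : 0 < ε) (hx : 0 ≤ x) :
    0 < sinkhornStep s α ε x :=
  div_pos hs (by positivity)

theorem mapsTo_sinkhornRound (hs : 0 < s) (hα : 0 < α) (hβ : 0 < β) (hε : 0 < ε) :
    Set.MapsTo (sinkhornRound s α β ε) (Set.Ici 0) (Set.Ici 0) := fun _ hx =>
  (sinkhornStep_pos hs hβ hε (sinkhornStep_pos hs hα hε hx).le).le

theorem sinkhornLimit_pos (hs : 0 < s) (hα : 0 < α) (hβ : 0 < β) (hε : 0 < ε) :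
    0 < sinkhornLimit s α β ε := by
  have : ε * α / 2 * s⁻¹ < √(ε ^ 2 * α ^ 2 / 4 * (s⁻¹ * s⁻¹) + α / β) :=
    (Real.lt_sqrt (by positivity)).2 <| by
      rw [show (ε * α / 2 * s⁻¹) ^ 2 = ε ^ 2 * α ^ 2 / 4 * (s⁻¹ * s⁻¹) by ring]
      exact lt_add_of_pos_right _ (div_pos hα hβ)
  rw [sinkhornLimit]
  linarith

theorem sinkhornLimit_mul_add (hs : s ≠ 0) (hαβ : 0 ≤ α / β) :
    sinkhornLimit s α β ε * (sinkhornLimit s α β ε * s + ε * α) = α / β * s := by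
  have hq₀ : 0 ≤ ε ^ 2 * α ^ 2 / 4 * (s⁻¹ * s⁻¹) + α / β :=
    add_nonneg (mul_nonneg (by positivity) (mul_self_nonneg _)) hαβ
  have hq := Real.sq_sqrt hq₀
  rw [sinkhornLimit]
  set q := √(ε ^ 2 * α ^ 2 / 4 * (s⁻¹ * s⁻¹) + α / β)
  field_simp at hq ⊢
  linear_combination hq

theorem sinkhornLimit_swap (hα : 0 < α) (hβ : 0 < β) :
    sinkhornLimit s β α ε = β / α * sinkhornLimit s α β ε := by
  have hsqrt : √(ε ^ 2 * β ^ 2 / 4 * (s⁻¹ * s⁻¹) + β / α) =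
      β / α * √(ε ^ 2 * α ^ 2 / 4 * (s⁻¹ * s⁻¹) + α / β) := by
    rw [← Real.sqrt_sq (div_pos hβ hα).le, ← Real.sqrt_mul (sq_nonneg _),
      Real.sqrt_sq (div_pos hβ hα).le]
    congr 1
    field_simp
  rw [sinkhornLimit, sinkhornLimit, hsqrt]
  field_simp

theorem sinkhornStep_sinkhornLimit (hs : 0 < s) (hα : 0 < α) (hβ : 0 < β) (hε : 0 < ε) :
    sinkhornStep s α ε (sinkhornLimit s α β ε) = sinkhornLimit s β α ε := by
  have h := sinkhornLimit_mul_add (ε := ε) hs.ne' (div_pos hα hβ).le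
  have hden : sinkhornLimit s α β ε * s + ε * α ≠ 0 := by
    have := sinkhornLimit_pos hs hα hβ hε
    positivity
  rw [sinkhornLimit_swap hα hβ, sinkhornStep, div_eq_iff hden, mul_assoc, h]
  field_simp

theorem sinkhornRound_sinkhornLimit (hs : 0 < s) (hα : 0 < α) (hβ : 0 < β) (hε : 0 < ε) :
    sinkhornRound s α β ε (sinkhornLimit s α β ε) = sinkhornLimit s α β ε := by
  rw [sinkhornRound, sinkhornStep_sinkhornLimit hs hα hβ hε,
    sinkhornStep_sinkhornLimit hs hβ hα hε]

theorem sinkhornRound_eq (hs : 0 < s) (hα : 0 < α) (hε : 0 < ε) (hx : 0 ≤ x) :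
    sinkhornRound s α β ε x =
      (s ^ 2 * x + ε * α * s) / (ε * β * s * x + (s ^ 2 + ε ^ 2 * α * β)) := by
  have : 0 < x * s + ε * α := by positivity
  rw [sinkhornRound, sinkhornStep, sinkhornStep]
  field_simp
  ring

theorem dist_sinkhornRound_le (hs : 0 < s) (hα : 0 < α) (hβ : 0 < β) (hε : 0 < ε)
    (hx : 0 ≤ x) (hy : 0 ≤ y) :
    dist (sinkhornRound s α β ε x) (sinkhornRound s α β ε y) ≤
      (s ^ 2 / (s ^ 2 + ε ^ 2 * α * β)) ^ 2 * dist x y := by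
  set c := s ^ 2 + ε ^ 2 * α * β
  have hc : 0 < c := by positivity
  have hcx : c ≤ ε * β * s * x + c := le_add_of_nonneg_left (by positivity)
  have hcy : c ≤ ε * β * s * y + c := le_add_of_nonneg_left (by positivity)
  have hD : 0 < (ε * β * s * x + c) * (ε * β * s * y + c) := by positivity
  have hsub : sinkhornRound s α β ε x - sinkhornRound s α β ε y =
      s ^ 4 * (x - y) / ((ε * β * s * x + c) * (ε * β * s * y + c)) := by
    rw [sinkhornRound_eq hs hα hε hx, sinkhornRound_eq hs hα hε hy]
    field_simp
    ring
  calc dist (sinkhornRound s α β ε x) (sinkhornRound s α β ε y)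
      = s ^ 4 * dist x y / ((ε * β * s * x + c) * (ε * β * s * y + c)) := by
        rw [Real.dist_eq, Real.dist_eq, hsub, abs_div, abs_mul, abs_of_pos hD,
          abs_of_pos (by positivity : 0 < s ^ 4)]
    _ ≤ s ^ 4 * dist x y / (c * c) := by gcongr
    _ = (s ^ 2 / c) ^ 2 * dist x y := by field_simp

theorem tendsto_sinkhornRound_iterate (hs : 0 < s) (hα : 0 < α) (hβ : 0 < β) (hε : 0 < ε)
    (hx : 0 ≤ x) :
    Tendsto (fun n => (sinkhornRound s α β ε)^[n] x) atTop (𝓝 (sinkhornLimit s α β ε)) := by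
  have hk : s ^ 2 / (s ^ 2 + ε ^ 2 * α * β) < 1 :=
    (div_lt_one (by positivity)).2 (lt_add_of_pos_right _ (by positivity))
  refine tendsto_iterate_of_dist_le_mul (by positivity)
    (pow_lt_one₀ (by positivity) hk two_ne_zero) (mapsTo_sinkhornRound hs hα hβ hε)
    (fun y hy => ?_) hx
  simpa only [sinkhornRound_sinkhornLimit hs hα hβ hε] using
    dist_sinkhornRound_le hs hα hβ hε hy (sinkhornLimit_pos hs hα hβ hε).le

theorem tendsto_sinkhornStep_sinkhornRound_iterate (hs : 0 < s) (hα : 0 < α) (hβ : 0 < β)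
    (hε : 0 < ε) (hx : 0 ≤ x) :
    Tendsto (fun n => sinkhornStep s α ε ((sinkhornRound s α β ε)^[n] x)) atTop
      (𝓝 (sinkhornLimit s β α ε)) := by
  have hden : sinkhornLimit s α β ε * s + ε * α ≠ 0 := by
    have := sinkhornLimit_pos hs hα hβ hε
    positivity
  rw [← sinkhornStep_sinkhornLimit hs hα hβ hε]
  exact tendsto_const_nhds.div
    (((tendsto_sinkhornRound_iterate hs hα hβ hε hx).mul_const s).add_const _) hden

end SinkhornScalar

section SinkhornMatrix

variable {n : Type*} [Fintype n] [DecidableEq n] {U : unitaryGroup n ℝ} {s : n → ℝ}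

theorem sinkhorn_eq_conjDiagonal {a : n → ℝ} {α β ε : ℝ} (hs : ∀ i, 0 < s i)
    (ha : ∀ i, 0 ≤ a i) (hα : 0 < α) (hβ : 0 < β) (hε : 0 < ε) {A B : ℕ → Matrix n n ℝ}
    (hA_zero : A 0 = conjDiagonal U a)
    (hB_def : ∀ k, B k = conjDiagonal U s * (A k * conjDiagonal U s + (ε * α) • 1)⁻¹)
    (hA_def : ∀ k, A (k + 1) = conjDiagonal U s * (B k * conjDiagonal U s + (ε * β) • 1)⁻¹)
    (k : ℕ) :
    A k = conjDiagonal U (fun i => (sinkhornRound (s i) α β ε)^[k] (a i)) ∧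
      B k = conjDiagonal U fun i =>
        sinkhornStep (s i) α ε ((sinkhornRound (s i) α β ε)^[k] (a i)) := by
  have hstep {M : Matrix n n ℝ} {x : n → ℝ} {γ : ℝ} (hγ : 0 < γ) (hx : ∀ i, 0 ≤ x i)
      (hM : M = conjDiagonal U x) :
      conjDiagonal U s * (M * conjDiagonal U s + (ε * γ) • 1)⁻¹ =
        conjDiagonal U fun i => sinkhornStep (s i) γ ε (x i) := by
    subst hM
    refine conjDiagonal_mul_inv_mul_add_smul_one fun i => ?_
    have := hs i
    have := hx i
    positivity
  have hx (k i) : 0 ≤ (sinkhornRound (s i) α β ε)^[k] (a i) :=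
    (mapsTo_sinkhornRound (hs i) hα hβ hε).iterate k (ha i)
  have hB {k} (hA : A k = conjDiagonal U fun i => (sinkhornRound (s i) α β ε)^[k] (a i)) :
      B k = conjDiagonal U fun i =>
        sinkhornStep (s i) α ε ((sinkhornRound (s i) α β ε)^[k] (a i)) := by
    rw [hB_def, hstep hα (hx k) hA]
  have hA : A k = conjDiagonal U fun i => (sinkhornRound (s i) α β ε)^[k] (a i) := by
    induction k with
    | zero => exact hA_zero
    | succ k ih =>
      rw [hA_def, hstep hβ (fun i => (sinkhornStep_pos (hs i) hα hε (hx k i)).le) (hB ih)]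
      simp only [Function.iterate_succ_apply', sinkhornRound]
  exact ⟨hA, hB hA⟩

theorem exists_sqrt_add_eq_conjDiagonal_sinkhornLimit (hs : ∀ i, s i ≠ 0) (α β ε : ℝ)
    (hαβ : 0 ≤ α / β) :
    ∃ S : Matrix n n ℝ, S.PosSemidef ∧
      S ^ 2 = (ε ^ 2 * α ^ 2 / 4) • ((conjDiagonal U s)⁻¹ * (conjDiagonal U s)⁻¹) +
        (α / β) • 1 ∧
      -(ε * α / 2) • (conjDiagonal U s)⁻¹ + S =
        conjDiagonal U fun i => sinkhornLimit (s i) α β ε := by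
  have hq (i) : 0 ≤ ε ^ 2 * α ^ 2 / 4 * ((s i)⁻¹ * (s i)⁻¹) + α / β :=
    add_nonneg (mul_nonneg (by positivity) (mul_self_nonneg _)) hαβ
  refine ⟨conjDiagonal U fun i => √(ε ^ 2 * α ^ 2 / 4 * ((s i)⁻¹ * (s i)⁻¹) + α / β),
    posSemidef_conjDiagonal_iff.2 fun i => Real.sqrt_nonneg _, ?_, ?_⟩ <;>
    rw [conjDiagonal_inv hs]
  · rw [← map_pow, ← map_mul, ← map_smul, ← map_one (conjDiagonal U), ← map_smul, ← map_add]
    congr 1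
    ext i
    simp [Real.sq_sqrt (hq i)]
  · rw [← map_smul, ← map_add]
    rfl

end SinkhornMatrix

theorem matrix_sinkhorn_recursion_converges_general {d : ℕ}
    (Sg A0 : Matrix (Fin d) (Fin d) ℝ)
    (hSg_pos : Sg.PosDef)
    (hA0_psd : A0.PosSemidef) (hA0_comm : A0 * Sg = Sg * A0)
    (α β ε : ℝ) (hα : 0 < α) (hβ : 0 < β) (hε : 0 < ε)
    (A B : ℕ → Matrix (Fin d) (Fin d) ℝ)
    (hA_zero : A 0 = A0)
    (hB_def : ∀ n, B n = Sg * (A n * Sg + (ε * α) • (1 : Matrix (Fin d) (Fin d) ℝ))⁻¹)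
    (hA_def : ∀ n, A (n + 1) = Sg * (B n * Sg + (ε * β) • (1 : Matrix (Fin d) (Fin d) ℝ))⁻¹) :
    (∀ n, IsUnit (A n * Sg + (ε * α) • (1 : Matrix (Fin d) (Fin d) ℝ))
      ∧ IsUnit (B n * Sg + (ε * β) • (1 : Matrix (Fin d) (Fin d) ℝ))
      ∧ (A n).PosSemidef ∧ A n * Sg = Sg * A n
      ∧ (B n).PosSemidef ∧ B n * Sg = Sg * B n
      ∧ (B n).PosDef ∧ (A (n + 1)).PosDef) ∧
    ∃ SA SB : Matrix (Fin d) (Fin d) ℝ,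
      SA.PosSemidef ∧ SA ^ 2 = (ε ^ 2 * α ^ 2 / 4) • (Sg⁻¹ * Sg⁻¹) + (α / β) • 1 ∧
      SB.PosSemidef ∧ SB ^ 2 = (ε ^ 2 * β ^ 2 / 4) • (Sg⁻¹ * Sg⁻¹) + (β / α) • 1 ∧
      Tendsto A atTop (nhds (-(ε * α / 2) • Sg⁻¹ + SA)) ∧
      Tendsto B atTop (nhds (-(ε * β / 2) • Sg⁻¹ + SB)) := by
  obtain ⟨U, s, a, rfl, rfl⟩ :=
    hSg_pos.isHermitian.exists_conjDiagonal_of_commute hA0_psd.isHermitian hA0_comm.symm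
  have hs := posDef_conjDiagonal_iff.mp hSg_pos
  have hs₀ (i) : s i ≠ 0 := (hs i).ne'
  have ha := posSemidef_conjDiagonal_iff.mp hA0_psd
  have hx (k i) : 0 ≤ (sinkhornRound (s i) α β ε)^[k] (a i) :=
    (mapsTo_sinkhornRound (hs i) hα hβ hε).iterate k (ha i)
  have hy (k i) : 0 < sinkhornStep (s i) α ε ((sinkhornRound (s i) α β ε)^[k] (a i)) :=
    sinkhornStep_pos (hs i) hα hε (hx k i)
  have hAB := sinkhorn_eq_conjDiagonal hs ha hα hβ hε hA_zero hB_def hA_def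
  obtain ⟨SA, hSA, hSA_sq, hSA_lim⟩ :=
    exists_sqrt_add_eq_conjDiagonal_sinkhornLimit (U := U) hs₀ α β ε (div_pos hα hβ).le
  obtain ⟨SB, hSB, hSB_sq, hSB_lim⟩ :=
    exists_sqrt_add_eq_conjDiagonal_sinkhornLimit (U := U) hs₀ β α ε (div_pos hβ hα).le
  refine ⟨fun k => ?_, SA, SB, hSA, hSA_sq, hSB, hSB_sq, ?_, ?_⟩
  · rw [(hAB k).1, (hAB k).2, (hAB (k + 1)).1, conjDiagonal_mul_add_smul_one,
      conjDiagonal_mul_add_smul_one, posSemidef_conjDiagonal_iff, posSemidef_conjDiagonal_iff,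
      posDef_conjDiagonal_iff, posDef_conjDiagonal_iff]
    refine ⟨isUnit_conjDiagonal fun i => ?_, isUnit_conjDiagonal fun i => ?_, hx k,
      commute_conjDiagonal _ _, fun i => (hy k i).le, commute_conjDiagonal _ _, hy k,
      fun i => ?_⟩
    · have := hx k i; have := hs i; positivity
    · have := hy k i; have := hs i; positivity
    · rw [Function.iterate_succ_apply']
      exact sinkhornStep_pos (hs i) hβ hε (hy k i).le
  · rw [hSA_lim, funext fun k => (hAB k).1]
    exact (continuous_conjDiagonal.tendsto _).comp
      (tendsto_pi_nhds.2 fun i => tendsto_sinkhornRound_iterate (hs i) hα hβ hε (ha i))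
  · rw [hSB_lim, funext fun k => (hAB k).2]
    exact (continuous_conjDiagonal.tendsto _).comp (tendsto_pi_nhds.2 fun i =>
      tendsto_sinkhornStep_sinkhornRound_iterate (hs i) hα hβ hε (ha i))

/-- Lemma 2.2: convergence of the matrix recursion along Sinkhorn's algorithm. -/
theorem matrix_sinkhorn_recursion_converges {d : ℕ}
    (Sg A0 : Matrix (Fin d) (Fin d) ℝ)
    (hSg_symm : Sg.IsSymm) (hSg_pos : Sg.PosDef)
    (hA0_psd : A0.PosSemidef) (hA0_comm : A0 * Sg = Sg * A0)
    (α β ε : ℝ) (hα : 0 < α) (hβ : 0 < β) (hε : 0 < ε)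
    (A B : ℕ → Matrix (Fin d) (Fin d) ℝ)
    (hA_zero : A 0 = A0)
    (hB_def : ∀ n, B n = Sg * (A n * Sg + (ε * α) • (1 : Matrix (Fin d) (Fin d) ℝ))⁻¹)
    (hA_def : ∀ n, A (n + 1) = Sg * (B n * Sg + (ε * β) • (1 : Matrix (Fin d) (Fin d) ℝ))⁻¹) :
    (∀ n, IsUnit (A n * Sg + (ε * α) • (1 : Matrix (Fin d) (Fin d) ℝ))
      ∧ IsUnit (B n * Sg + (ε * β) • (1 : Matrix (Fin d) (Fin d) ℝ))
      ∧ (A n).PosSemidef ∧ A n * Sg = Sg * A n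
      ∧ (B n).PosSemidef ∧ B n * Sg = Sg * B n
      ∧ (B n).PosDef ∧ (A (n + 1)).PosDef) ∧
    ∃ SA SB : Matrix (Fin d) (Fin d) ℝ,
      SA.PosSemidef ∧ SA ^ 2 = (ε ^ 2 * α ^ 2 / 4) • (Sg⁻¹ * Sg⁻¹) + (α / β) • 1 ∧
      SB.PosSemidef ∧ SB ^ 2 = (ε ^ 2 * β ^ 2 / 4) • (Sg⁻¹ * Sg⁻¹) + (β / α) • 1 ∧
      Tendsto A atTop (nhds (-(ε * α / 2) • Sg⁻¹ + SA)) ∧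
      Tendsto B atTop (nhds (-(ε * β / 2) • Sg⁻¹ + SB)) :=
  matrix_sinkhorn_recursion_converges_general Sg A0 hSg_pos hA0_psd hA0_comm α β ε hα hβ hε A B
    hA_zero hB_def hA_def
end
end
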